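/- arXiv:1505.05922 — 4 statements merged into one kernel-verified Lean document; each statement's English description precedes it below -/
import Mathlib

section
/- Let A be a semilocal Dedekind domain with maximal ideals 𝔪₁,…,𝔪ᵣ, and let A' be the localization of the polynomial ring A[t] at the multiplicative set of all polynomials not contained in any of the prime ideals 𝔪ᵢ·A[t]. Then A' is again a semilocal Dedekind domain whose maximal ideals are exactly the ideals 𝔪₁A',…,𝔪ᵣA'; moreover, if s ∈ 𝔪₁⋯𝔪ᵣ, then s ∈ (𝔪₁A')⋯(𝔪ᵣA'). -/
/-!
Since `A` has finitely many maximal ideals it is a PID, so each `𝔪ᵢ = (pᵢ)` and `𝔪ᵢA[t] = (pᵢ)`.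
A nonzero prime inside `(p)` must contain `p`: otherwise every element of it would be divisible
by every power of `p`. So the `𝔪ᵢA[t]` are pairwise incomparable primes of height one. By prime
avoidance a prime of `A[t]` missing `S` lies in some `𝔪ᵢA[t]`, hence the nonzero primes of `A'`
are exactly the `𝔪ᵢA'`, all maximal. Noetherianity and integral closedness pass from `A[t]` to
its localization `A'`.
-/

open Polynomial

theorem Ideal.IsPrime.eq_span_singleton_of_le {R : Type*} [CommRing R] [IsDomain R]
    [WfDvdMonoid R] {p : R} (hp : ¬IsUnit p) {Q : Ideal R} (hQ : Q.IsPrime) (hQ0 : Q ≠ ⊥)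
    (hle : Q ≤ span {p}) : Q = span {p} := by
  refine le_antisymm hle ((span_singleton_le_iff_mem _).mpr ?_)
  by_contra hpQ
  have hdvd : ∀ n : ℕ, ∀ f ∈ Q, p ^ n ∣ f := by
    intro n
    induction n with
    | zero => simp
    | succ n ih =>
      intro f hf
      obtain ⟨g, rfl⟩ := mem_span_singleton'.mp (hle hf)
      have hg : g ∈ Q := (hQ.mem_or_mem hf).resolve_right hpQ
      exact pow_succ p n ▸ mul_dvd_mul (ih g hg) dvd_rfl
  obtain ⟨f, hfQ, hf0⟩ := Submodule.exists_mem_ne_zero_of_ne_bot hQ0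
  exact FiniteMultiplicity.not_iff_forall.mpr (hdvd · f hfQ) (.of_not_isUnit hp hf0)

theorem Polynomial.eq_map_C_of_isPrime_of_le {R : Type*} [CommRing R] [IsDomain R]
    [WfDvdMonoid R] {I : Ideal R} (hI : I.IsPrincipal) (hI_top : I ≠ ⊤) {Q : Ideal R[X]}
    (hQ : Q.IsPrime) (hQ0 : Q ≠ ⊥) (hle : Q ≤ I.map C) : Q = I.map C := by
  obtain ⟨p, rfl⟩ := hI
  simp only [Ideal.submodule_span_eq, ne_eq, Ideal.span_singleton_eq_top] at hI_top
  simp only [Ideal.submodule_span_eq, Ideal.map_span, Set.image_singleton] at hle ⊢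
  exact hQ.eq_span_singleton_of_le (mt isUnit_C.mp hI_top) hQ0 hle

theorem Ideal.map_finset_prod {R S ι : Type*} [CommRing R] [CommRing S] (f : R →+* S)
    (s : Finset ι) (I : ι → Ideal R) : (∏ i ∈ s, I i).map f = ∏ i ∈ s, (I i).map f :=
  map_prod (Ideal.mapHom f) I s

namespace IsLocalization

variable {R : Type*} [CommRing R] {ι : Type*} {s : Finset ι} {P : ι → Ideal R}
  {S : Submonoid R} {L : Type*} [CommRing L] [Algebra R L] [IsLocalization S L]

theorem disjoint_of_coe_eq_setOf (hS : (S : Set R) = {f | ∀ i ∈ s, f ∉ P i}) {i : ι}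
    (hi : i ∈ s) : Disjoint (S : Set R) (P i) :=
  Set.disjoint_left.mpr fun f hf => (hS ▸ hf : f ∈ {f | ∀ i ∈ s, f ∉ P i}) i hi

theorem le_nonZeroDivisors_of_coe_eq_setOf [IsDomain R]
    (hS : (S : Set R) = {f | ∀ i ∈ s, f ∉ P i}) (hs : s.Nonempty) : S ≤ nonZeroDivisors R :=
  le_nonZeroDivisors_of_noZeroDivisors fun h0 =>
    let ⟨_, hi⟩ := hs
    (disjoint_of_coe_eq_setOf hS hi).ne_of_mem h0 (zero_mem _) rfl

theorem exists_under_le_of_ne_top (hP : ∀ i ∈ s, (P i).IsPrime)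
    (hS : (S : Set R) = {f | ∀ i ∈ s, f ∉ P i}) {J : Ideal L} (hJ : J ≠ ⊤) :
    ∃ i ∈ s, J.under R ≤ P i := by
  have hdisj := (disjoint_under_iff S L J).mpr hJ
  have hsub : (J.under R : Set R) ⊆ ⋃ i ∈ (s : Set ι), (P i : Set R) := fun f hf => by
    have hfS : f ∉ {f | ∀ i ∈ s, f ∉ P i} := hS ▸ Set.disjoint_right.mp hdisj hf
    simp only [Set.mem_ofPred_eq, not_forall, not_not] at hfS
    obtain ⟨i, hi, hfi⟩ := hfS
    exact Set.mem_biUnion hi hfi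
  -- `subset_union_prime` asks for two indices exempt from primality; any index will do
  obtain ⟨a, -⟩ : ∃ a, a ∈ s := by simpa using Set.Nonempty.mono hsub ⟨0, zero_mem _⟩
  exact (Ideal.subset_union_prime a a fun i hi _ _ => hP i hi).mp hsub

theorem isMaximal_iff_exists_eq_map (hP : ∀ i ∈ s, (P i).IsPrime)
    (hS : (S : Set R) = {f | ∀ i ∈ s, f ∉ P i})
    (hinc : ∀ i ∈ s, ∀ j ∈ s, P i ≤ P j → P i = P j) (𝔐 : Ideal L) :
    𝔐.IsMaximal ↔ ∃ i ∈ s, 𝔐 = (P i).map (algebraMap R L) := by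
  have hprime : ∀ i ∈ s, ((P i).map (algebraMap R L)).IsPrime := fun i hi =>
    isPrime_of_isPrime_disjoint S L _ (hP i hi) (disjoint_of_coe_eq_setOf hS hi)
  have hunder : ∀ i ∈ s, ((P i).map (algebraMap R L)).under R = P i := fun i hi =>
    under_map_of_isPrime_disjoint S L (hP i hi) (disjoint_of_coe_eq_setOf hS hi)
  have hle_map : ∀ J : Ideal L, J ≠ ⊤ → ∃ i ∈ s, J ≤ (P i).map (algebraMap R L) := by
    intro J hJ
    obtain ⟨i, hi, hJi⟩ := exists_under_le_of_ne_top hP hS hJ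
    exact ⟨i, hi, map_under S L J ▸ Ideal.map_mono hJi⟩
  refine ⟨fun h𝔐 => ?_, ?_⟩
  · obtain ⟨i, hi, h𝔐i⟩ := hle_map 𝔐 h𝔐.ne_top
    exact ⟨i, hi, h𝔐.eq_of_le (hprime i hi).ne_top h𝔐i⟩
  · rintro ⟨i, hi, rfl⟩
    obtain ⟨𝔐, h𝔐, hi𝔐⟩ := Ideal.exists_le_maximal _ (hprime i hi).ne_top
    obtain ⟨j, hj, h𝔐j⟩ := hle_map 𝔐 h𝔐.ne_top
    have hij : P i ≤ P j := by
      simpa only [hunder i hi, hunder j hj] using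
        Ideal.comap_mono (f := algebraMap R L) (hi𝔐.trans h𝔐j)
    rwa [le_antisymm hi𝔐 (hinc i hi j hj hij ▸ h𝔐j)]

theorem dimensionLEOne (hP : ∀ i ∈ s, (P i).IsPrime)
    (hS : (S : Set R) = {f | ∀ i ∈ s, f ∉ P i})
    (hinc : ∀ i ∈ s, ∀ j ∈ s, P i ≤ P j → P i = P j)
    (hheight : ∀ i ∈ s, ∀ Q : Ideal R, Q.IsPrime → Q ≠ ⊥ → Q ≤ P i → Q = P i) :
    Ring.DimensionLEOne L := by
  refine ⟨fun {𝔓} h𝔓0 h𝔓 => ?_⟩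
  obtain ⟨i, hi, h𝔓i⟩ := exists_under_le_of_ne_top hP hS h𝔓.ne_top
  have hunder0 : 𝔓.under R ≠ ⊥ := fun h => h𝔓0 (by rw [← map_under S L 𝔓, h, Ideal.map_bot])
  have hunder := hheight i hi _ ((isPrime_iff_isPrime_disjoint S L 𝔓).mp h𝔓).1 hunder0 h𝔓i
  rw [isMaximal_iff_exists_eq_map hP hS hinc]
  exact ⟨i, hi, by rw [← map_under S L 𝔓, hunder]⟩

variable (L) in
theorem isDedekindDomain_of_coe_eq_setOf [IsDomain R] [IsNoetherianRing R] [IsIntegrallyClosed R]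
    (hP : ∀ i ∈ s, (P i).IsPrime) (hS : (S : Set R) = {f | ∀ i ∈ s, f ∉ P i})
    (hinc : ∀ i ∈ s, ∀ j ∈ s, P i ≤ P j → P i = P j)
    (hheight : ∀ i ∈ s, ∀ Q : Ideal R, Q.IsPrime → Q ≠ ⊥ → Q ≤ P i → Q = P i)
    (hs : s.Nonempty) : IsDedekindDomain L :=
  have hS_nzd := le_nonZeroDivisors_of_coe_eq_setOf hS hs
  have : IsDomain L := isDomain_of_le_nonZeroDivisors L hS_nzd
  have : IsNoetherianRing L := isNoetherianRing S L inferInstance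
  have : IsIntegrallyClosed L := isIntegrallyClosed_of_isLocalization L S hS_nzd
  have : Ring.DimensionLEOne L := dimensionLEOne hP hS hinc hheight
  { }

theorem not_isField [IsDomain R] (hS : (S : Set R) = {f | ∀ i ∈ s, f ∉ P i}) {i : ι}
    (hi : i ∈ s) (hPi : (P i).IsPrime) (hPi0 : P i ≠ ⊥) : ¬IsField L := by
  have hS_nzd := le_nonZeroDivisors_of_coe_eq_setOf hS ⟨i, hi⟩
  have : IsDomain L := isDomain_of_le_nonZeroDivisors L hS_nzd
  refine Ring.not_isField_iff_exists_prime.mpr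
    ⟨_, ?_, isPrime_of_isPrime_disjoint S L _ hPi (disjoint_of_coe_eq_setOf hS hi)⟩
  rwa [ne_eq, Ideal.map_eq_bot_iff_of_injective (IsLocalization.injective L hS_nzd)]

end IsLocalization

/-- Let `A` be a semilocal Dedekind domain with (finitely many) maximal
ideals `𝔪₁, …, 𝔪ᵣ` (collected in the finset `M`), and let `A'` be the localization of the
polynomial ring `A[t]` at the multiplicative set `S` of all polynomials not contained in any
of the prime ideals `𝔪ᵢ·A[t]`.  Then `A'` is again a semilocal Dedekind domain whose maximal
ideals are exactly `𝔪₁A', …, 𝔪ᵣA'`; moreover if `s ∈ 𝔪₁⋯𝔪ᵣ` then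
`s ∈ (𝔪₁A')⋯(𝔪ᵣA')`. -/
theorem stmt_2 {A : Type*} [CommRing A] [IsDedekindDomain A] (hA : ¬ IsField A)
    (M : Finset (Ideal A)) (hM : ∀ m : Ideal A, m ∈ M ↔ m.IsMaximal)
    (S : Submonoid (Polynomial A))
    (hS : (S : Set (Polynomial A)) =
      {f : Polynomial A | ∀ m ∈ M, f ∉ Ideal.map (C : A →+* Polynomial A) m})
    (A' : Type*) [CommRing A'] [Algebra (Polynomial A) A'] [IsLocalization S A'] :
    IsDedekindDomain A' ∧ ¬ IsField A' ∧
    (∀ P : Ideal A', P.IsMaximal ↔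
      ∃ m ∈ M, P = Ideal.map (algebraMap (Polynomial A) A')
        (Ideal.map (C : A →+* Polynomial A) m)) ∧
    (∀ s : A, s ∈ ∏ m ∈ M, m →
      algebraMap (Polynomial A) A' (C s) ∈
        ∏ m ∈ M, Ideal.map (algebraMap (Polynomial A) A')
          (Ideal.map (C : A →+* Polynomial A) m)) := by
  have hmax (m) (hm : m ∈ M) : m.IsMaximal := (hM m).mp hm
  have : IsPrincipalIdealRing A :=
    .of_finite_maximals (M.finite_toSet.subset fun m hm => (hM m).mpr hm)
  have hprime (m) (hm : m ∈ M) : (m.map (C : A →+* A[X])).IsPrime :=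
    have := (hmax m hm).isPrime; Ideal.isPrime_map_C_of_isPrime
  have hne_bot (m) (hm : m ∈ M) : m.map (C : A →+* A[X]) ≠ ⊥ := by
    have := hmax m hm
    rw [ne_eq, Ideal.map_eq_bot_iff_of_injective C_injective]
    exact (Ideal.bot_lt_of_maximal m hA).ne'
  have hheight (m) (hm : m ∈ M) (Q : Ideal A[X]) (hQ : Q.IsPrime) (hQ0 : Q ≠ ⊥)
      (hle : Q ≤ m.map C) : Q = m.map C :=
    eq_map_C_of_isPrime_of_le (IsPrincipalIdealRing.principal m) (hmax m hm).ne_top hQ hQ0 hle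
  have hinc (m) (hm : m ∈ M) (m') (hm' : m' ∈ M) (hle : m.map (C : A →+* A[X]) ≤ m'.map C) :
      m.map (C : A →+* A[X]) = m'.map C :=
    hheight m' hm' _ (hprime m hm) (hne_bot m hm) hle
  obtain ⟨m₀, hm₀⟩ := Ideal.exists_maximal A
  have hm₀M : m₀ ∈ M := (hM m₀).mpr hm₀
  refine ⟨IsLocalization.isDedekindDomain_of_coe_eq_setOf A' hprime hS hinc hheight ⟨m₀, hm₀M⟩,
    IsLocalization.not_isField hS hm₀M (hprime m₀ hm₀M) (hne_bot m₀ hm₀M),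
    IsLocalization.isMaximal_iff_exists_eq_map hprime hS hinc, fun s hs => ?_⟩
  rw [← Ideal.map_finset_prod, ← Ideal.map_finset_prod]
  exact Ideal.mem_map_of_mem _ (Ideal.mem_map_of_mem _ hs)
end

section
/- Let A be a semilocal Dedekind domain with maximal ideals 𝔪₁,…,𝔪ᵣ, s ∈ 𝔪₁⋯𝔪ᵣ nonzero, and n ≥ 2. For j ∈ {1,…,n}, let A^(j) be the localization of A[tⱼ] at the multiplicative set of polynomials lying in no 𝔪ᵢ·A[tⱼ], and let ι_j(f) denote a nonzero polynomial f ∈ A[t₁,…,tₙ] regarded as a polynomial in the n−1 variables t₁,…,t̂ⱼ,…,tₙ (tⱼ omitted) with coefficients in A^(j). Then f satisfies conditions (Q1) and (Q2) over (A, s) if and only if for every j ∈ {1,…,n} the polynomial ι_j(f) satisfies conditions (Q1) and (Q2) over (A^(j), s). -/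
/-!
The coefficient of `ι_j(f)` at a multi-index `d` in the variables other than `tⱼ` is the image
in `A⁽ʲ⁾` of `c_d(tⱼ) = ∑ₖ a_{d,k} tⱼᵏ`. The polynomials inverted in `A⁽ʲ⁾` are exactly those
whose coefficients generate the unit ideal; by McCoy's theorem they remain non-zero-divisors
modulo any constant `b`, so inverting them neither kills anything nor creates new divisibilities
by constants. Hence `A[tⱼ] → A⁽ʲ⁾` is injective, `ι_j(f)` has the partial degrees of `f`, and
(Q1) for `ι_j(f)` says that `s^e` divides every `a_{d,k}`, with `e` the maximum of `Nᵢ - dᵢ` over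
`i ≠ j` only. Since `n ≥ 2`, the maximum over all `i` is attained at an index different from some
`j`, which gives (Q1) for `f`. For (Q2), the top coefficient of `ι_j(f)` is a unit iff its
coefficients generate the unit ideal; by (Q1) those below degree `Nⱼ` are multiples of `s`, which
lies in every maximal ideal, and those above `Nⱼ` vanish, so this happens iff `a_{N₁…Nₙ}` is a
unit.
-/

open MvPolynomial

/-- The multi-index `(N₁, …, Nₙ)` of the top coefficient of `f`, where
`Nⱼ = deg_{tⱼ} f`. -/
noncomputable def topDeg {A : Type*} [CommSemiring A] {σ : Type*} [Fintype σ]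
    (f : MvPolynomial σ A) : σ →₀ ℕ :=
  Finsupp.equivFunOnFinite.symm fun j => degreeOf j f

/-- Conditions (Q1) and (Q2) for a polynomial `f ∈ A[t₁,…,tₙ]` relative to `s ∈ A`:
(Q1) every coefficient `a_{i₁…iₙ}` lies in `s^{maxⱼ (Nⱼ−iⱼ)}·A`, and
(Q2) the top coefficient `a_{N₁…Nₙ}` is a unit. -/
def Q12 {A : Type*} [CommRing A] {σ : Type*} [Fintype σ] (s : A)
    (f : MvPolynomial σ A) : Prop :=
  (∀ d : σ →₀ ℕ, s ^ (Finset.univ.sup fun j => degreeOf j f - d j) ∣ coeff d f) ∧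
  IsUnit (coeff (topDeg f) f)

/-- The polynomial `ι_j(f)`: `f ∈ A[t₁,…,tₙ]` regarded as a polynomial in the variables
`t₁, …, t̂ⱼ, …, tₙ` with coefficients in the localization `A⁽ʲ⁾` of `A[tⱼ]`. -/
noncomputable def iota {A : Type*} [CommRing A] (S : Submonoid (Polynomial A))
    {n : ℕ} (j : Fin n) (f : MvPolynomial (Fin n) A) :
    MvPolynomial {i : Fin n // i ≠ j} (Localization S) :=
  MvPolynomial.eval₂
    ((MvPolynomial.C).comp ((algebraMap (Polynomial A) (Localization S)).comp Polynomial.C))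
    (fun i => if h : i = j then
        MvPolynomial.C (algebraMap (Polynomial A) (Localization S) Polynomial.X)
      else MvPolynomial.X ⟨i, h⟩) f

open scoped Polynomial nonZeroDivisors

namespace Polynomial

variable {R : Type*} [CommRing R] {p u : R[X]}

theorem contentIdeal_eq_top_iff_forall_notMem_map_C :
    p.contentIdeal = ⊤ ↔ ∀ m : Ideal R, m.IsMaximal → p ∉ m.map Polynomial.C := by
  have hle : ∀ m : Ideal R, p.contentIdeal ≤ m ↔ p ∈ m.map Polynomial.C := fun m => by
    rw [contentIdeal_def, Ideal.span_le, Ideal.mem_map_C_iff]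
    refine ⟨fun h k => ?_, fun h a ha => ?_⟩
    · by_cases hk : p.coeff k = 0
      · simp [hk]
      · exact h (coeff_mem_coeffs hk)
    · obtain ⟨k, -, rfl⟩ := mem_coeffs_iff.mp ha
      exact h k
  refine ⟨fun h m hm hp => hm.ne_top (top_le_iff.mp (h ▸ (hle m).mpr hp)), fun h => ?_⟩
  by_contra hne
  obtain ⟨m, hm, hpm⟩ := Ideal.exists_le_maximal _ hne
  exact h m hm ((hle m).mp hpm)

theorem mem_nonZeroDivisors_of_contentIdeal_eq_top (hp : p.contentIdeal = ⊤) : p ∈ R[X]⁰ := by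
  -- McCoy: it suffices that no nonzero constant annihilates `p`.
  refine Polynomial.mem_nonZeroDivisors_iff.mpr fun a ha => ?_
  have hcoeffs : p.contentIdeal ≤ LinearMap.ker (LinearMap.mulLeft R a) := by
    rw [contentIdeal_def, Ideal.span_le]
    rintro _ hc
    obtain ⟨k, -, rfl⟩ := mem_coeffs_iff.mp hc
    simpa using congr_arg (coeff · k) ha
  simpa using hcoeffs (hp ▸ Submodule.mem_top : (1 : R) ∈ p.contentIdeal)

theorem C_dvd_iff_map_span_singleton_eq_zero (b : R) (q : R[X]) :
    Polynomial.C b ∣ q ↔ q.map (Ideal.Quotient.mk (Ideal.span {b})) = 0 := by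
  simp [Polynomial.C_dvd_iff_dvd_coeff, Polynomial.ext_iff, Ideal.Quotient.eq_zero_iff_mem,
    Ideal.mem_span_singleton]

theorem C_dvd_of_dvd_mul_of_contentIdeal_eq_top (hu : u.contentIdeal = ⊤) {b : R}
    (h : Polynomial.C b ∣ u * p) : Polynomial.C b ∣ p := by
  rw [C_dvd_iff_map_span_singleton_eq_zero, Polynomial.map_mul] at h
  rw [C_dvd_iff_map_span_singleton_eq_zero]
  have hu' : (u.map (Ideal.Quotient.mk (Ideal.span {b}))).contentIdeal = ⊤ := by
    rw [contentIdeal_map_eq_map_contentIdeal, hu, Ideal.map_top]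
  exact (mem_nonZeroDivisors_of_contentIdeal_eq_top hu').2 _ (by rwa [mul_comm] at h)

theorem isUnit_coeff_of_contentIdeal_eq_top (hp : p.contentIdeal = ⊤) {N : ℕ}
    (h : ∀ k ≠ N, ∀ m : Ideal R, m.IsMaximal → p.coeff k ∈ m) : IsUnit (p.coeff N) := by
  by_contra hN
  obtain ⟨m, hm, hNm⟩ := exists_max_ideal_of_mem_nonunits (mem_nonunits_iff.mpr hN)
  refine contentIdeal_eq_top_iff_forall_notMem_map_C.mp hp m hm
    (Ideal.mem_map_C_iff.mpr fun k => ?_)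
  obtain rfl | hk := eq_or_ne k N
  exacts [hNm, h k hk m hm]

end Polynomial

theorem IsLocalization.exists_mem_dvd_mul_of_algebraMap_dvd {R S : Type*} [CommRing R]
    [CommRing S] [Algebra R S] (M : Submonoid R) [IsLocalization M S] {x y : R}
    (h : algebraMap R S x ∣ algebraMap R S y) : ∃ u ∈ M, x ∣ u * y := by
  obtain ⟨w, hw⟩ := h
  obtain ⟨⟨z, v⟩, rfl⟩ := IsLocalization.mk'_surjective M w
  have hyv : algebraMap R S (y * v) = algebraMap R S (x * z) := by
    rw [map_mul, map_mul, hw, mul_assoc, IsLocalization.mk'_spec]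
  obtain ⟨c, hc⟩ := (IsLocalization.eq_iff_exists M S).mp hyv
  exact ⟨c * v, mul_mem c.2 v.2, z * c, by linear_combination hc⟩

section UnitContent

variable {R : Type*} [CommRing R] {S : Submonoid R[X]}

theorem algebraMap_injective_of_contentIdeal_eq_top
    (hS : ∀ p ∈ S, p.contentIdeal = ⊤) :
    Function.Injective (algebraMap R[X] (Localization S)) :=
  IsLocalization.injective _ fun p hp =>
    Polynomial.mem_nonZeroDivisors_of_contentIdeal_eq_top (hS p hp)

theorem isUnit_algebraMap_iff_contentIdeal_eq_top
    (hS : ∀ p : R[X], p ∈ S ↔ p.contentIdeal = ⊤) {p : R[X]} :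
    IsUnit (algebraMap R[X] (Localization S) p) ↔ p.contentIdeal = ⊤ := by
  rw [IsLocalization.algebraMap_isUnit_iff S]
  refine ⟨fun ⟨u, hu, hpu⟩ => ?_, fun hp => ⟨p, (hS p).mpr hp, dvd_rfl⟩⟩
  exact top_le_iff.mp ((hS u).mp hu ▸ Polynomial.contentIdeal_le_contentIdeal_of_dvd hpu)

theorem C_dvd_of_algebraMap_C_dvd (hS : ∀ p ∈ S, p.contentIdeal = ⊤) {b : R} {p : R[X]}
    (h : algebraMap R[X] (Localization S) (Polynomial.C b) ∣ algebraMap _ _ p) :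
    Polynomial.C b ∣ p := by
  obtain ⟨u, hu, hdvd⟩ := IsLocalization.exists_mem_dvd_mul_of_algebraMap_dvd S h
  exact Polynomial.C_dvd_of_dvd_mul_of_contentIdeal_eq_top (hS u hu) hdvd

end UnitContent

namespace Finsupp

variable {σ M : Type*} [DecidableEq σ] [Zero M]

noncomputable def insertAt (j : σ) (k : M) (d : {i // i ≠ j} →₀ M) : σ →₀ M :=
  d.extendDomain.update j k

@[simp] theorem insertAt_self (j : σ) (k : M) (d : {i // i ≠ j} →₀ M) :
    insertAt j k d j = k := by
  simp [insertAt]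

@[simp] theorem insertAt_of_ne (j : σ) (k : M) (d : {i // i ≠ j} →₀ M) (i : {i // i ≠ j}) :
    insertAt j k d i = d i := by
  simp [insertAt, update_apply, i.2]

theorem eq_insertAt_iff {j : σ} {k : M} {d : {i // i ≠ j} →₀ M} {m : σ →₀ M} :
    m = insertAt j k d ↔ m.subtypeDomain (· ≠ j) = d ∧ m j = k := by
  constructor
  · rintro rfl
    exact ⟨by ext i; simp, by simp⟩
  · rintro ⟨rfl, rfl⟩
    ext i
    by_cases hi : i = j
    · subst hi; simp
    · simpa using (insertAt_of_ne j (m j) (m.subtypeDomain (· ≠ j)) ⟨i, hi⟩).symm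

@[simp] theorem insertAt_subtypeDomain (j : σ) (m : σ →₀ M) :
    insertAt j (m j) (m.subtypeDomain (· ≠ j)) = m :=
  (eq_insertAt_iff.mpr ⟨rfl, rfl⟩).symm

end Finsupp

section Iota

variable {A : Type*} [CommRing A]

noncomputable def coeffPoly {σ : Type*} [DecidableEq σ] (j : σ) (d : {i // i ≠ j} →₀ ℕ)
    (f : MvPolynomial σ A) : A[X] :=
  ∑ m ∈ f.support with m.subtypeDomain (· ≠ j) = d, Polynomial.monomial (m j) (coeff m f)

theorem coeff_coeffPoly {σ : Type*} [DecidableEq σ] (j : σ) (d : {i // i ≠ j} →₀ ℕ)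
    (f : MvPolynomial σ A) (k : ℕ) :
    (coeffPoly j d f).coeff k = coeff (Finsupp.insertAt j k d) f := by
  rw [coeffPoly, Polynomial.finsetSum_coeff, Finset.sum_filter]
  simp_rw [Polynomial.coeff_monomial, ← ite_and, ← Finsupp.eq_insertAt_iff]
  rw [Finset.sum_ite_eq']
  split_ifs with h
  · rfl
  · exact (notMem_support_iff.mp h).symm

variable {n : ℕ} (S : Submonoid A[X])

theorem iota_monomial (j : Fin n) (m : Fin n →₀ ℕ) (a : A) :
    iota S j (monomial m a) = monomial (m.subtypeDomain (· ≠ j))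
      (algebraMap A[X] (Localization S) (Polynomial.monomial (m j) a)) := by
  rw [iota, eval₂_monomial, monomial_eq, Finsupp.prod_fintype _ _ (by simp),
    Finsupp.prod_fintype _ _ (by simp), Fintype.prod_eq_mul_prod_subtype_ne _ j,
    ← Polynomial.C_mul_X_pow_eq_monomial]
  simp only [map_mul, map_pow, RingHom.coe_comp, Function.comp_apply, ↓reduceDIte, mul_assoc]
  congr 2
  refine Finset.prod_congr rfl fun i _ => ?_
  rw [dif_neg i.2, Finsupp.subtypeDomain_apply]

theorem iota_eq_sum (j : Fin n) (f : MvPolynomial (Fin n) A) :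
    iota S j f = ∑ m ∈ f.support, iota S j (monomial m (coeff m f)) := by
  conv_lhs => rw [f.as_sum]
  exact eval₂_sum _ _ _ _

theorem coeff_iota (j : Fin n) (f : MvPolynomial (Fin n) A) (d : {i // i ≠ j} →₀ ℕ) :
    coeff d (iota S j f) = algebraMap A[X] (Localization S) (coeffPoly j d f) := by
  rw [iota_eq_sum, coeff_sum, coeffPoly, map_sum, Finset.sum_filter]
  refine Finset.sum_congr rfl fun m _ => ?_
  rw [iota_monomial, coeff_monomial]

theorem support_iota (hS : Function.Injective (algebraMap A[X] (Localization S))) (j : Fin n)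
    (f : MvPolynomial (Fin n) A) :
    (iota S j f).support = f.support.image (Finsupp.subtypeDomain (· ≠ j)) := by
  ext d
  simp only [mem_support_iff, coeff_iota, ne_eq, map_eq_zero_iff _ hS, Finset.mem_image]
  simp only [Polynomial.ext_iff, Polynomial.coeff_zero, not_forall, coeff_coeffPoly]
  constructor
  · rintro ⟨k, hk⟩
    exact ⟨_, hk, (Finsupp.eq_insertAt_iff.mp rfl).1⟩
  · rintro ⟨m, hm, rfl⟩
    exact ⟨m j, by rwa [Finsupp.insertAt_subtypeDomain]⟩

theorem degreeOf_iota (hS : Function.Injective (algebraMap A[X] (Localization S))) (j : Fin n)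
    (f : MvPolynomial (Fin n) A) (i : {i // i ≠ j}) :
    degreeOf i (iota S j f) = degreeOf i.1 f := by
  rw [degreeOf_eq_sup, degreeOf_eq_sup, support_iota S hS, Finset.sup_image]
  rfl

theorem topDeg_iota (hS : Function.Injective (algebraMap A[X] (Localization S))) (j : Fin n)
    (f : MvPolynomial (Fin n) A) :
    topDeg (iota S j f) = (topDeg f).subtypeDomain (· ≠ j) := by
  ext i
  simp [topDeg, degreeOf_iota S hS]

end Iota

theorem Finset.exists_sup_le_sup_subtype_ne {σ α : Type*} [Fintype σ] [DecidableEq σ]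
    [Nontrivial σ] [LinearOrder α] [OrderBot α] (g : σ → α) :
    ∃ j, Finset.univ.sup g ≤ Finset.univ.sup fun i : {i // i ≠ j} => g i.1 := by
  obtain ⟨i₀, -, hi₀⟩ := Finset.exists_mem_eq_sup Finset.univ Finset.univ_nonempty g
  obtain ⟨j, hj⟩ := exists_ne i₀
  exact ⟨j, hi₀ ▸ Finset.le_sup (f := fun i : {i // i ≠ j} => g i.1)
    (Finset.mem_univ ⟨i₀, hj.symm⟩)⟩

section Q12

variable {A : Type*} [CommRing A] {S : Submonoid A[X]} {s : A} {n : ℕ}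
  {f : MvPolynomial (Fin n) A}

theorem Q12_iota (hS : ∀ p : A[X], p ∈ S ↔ p.contentIdeal = ⊤) (h : Q12 s f) (j : Fin n) :
    Q12 (algebraMap A[X] (Localization S) (Polynomial.C s)) (iota S j f) := by
  have hinj := algebraMap_injective_of_contentIdeal_eq_top fun p => (hS p).mp
  obtain ⟨hQ1, hQ2⟩ := h
  refine ⟨fun d => ?_, ?_⟩
  · rw [coeff_iota, ← map_pow, ← map_pow]
    refine map_dvd _ ((Polynomial.C_dvd_iff_dvd_coeff _ _).mpr fun k => ?_)
    rw [coeff_coeffPoly]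
    refine (pow_dvd_pow s (Finset.sup_le fun i _ => ?_)).trans (hQ1 _)
    rw [degreeOf_iota S hinj, ← Finsupp.insertAt_of_ne j k d i]
    exact Finset.le_sup (f := fun i => degreeOf i f - Finsupp.insertAt j k d i)
      (Finset.mem_univ i.1)
  · rw [topDeg_iota S hinj, coeff_iota, isUnit_algebraMap_iff_contentIdeal_eq_top hS]
    refine Ideal.eq_top_of_isUnit_mem _ (Polynomial.coeff_mem_contentIdeal _ (topDeg f j)) ?_
    rwa [coeff_coeffPoly, Finsupp.insertAt_subtypeDomain]

theorem dvd_coeff_of_forall_Q12_iota (hS : ∀ p ∈ S, p.contentIdeal = ⊤) [Nontrivial (Fin n)]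
    (h : ∀ j, Q12 (algebraMap A[X] (Localization S) (Polynomial.C s)) (iota S j f))
    (m : Fin n →₀ ℕ) : s ^ (Finset.univ.sup fun i => degreeOf i f - m i) ∣ coeff m f := by
  have hinj := algebraMap_injective_of_contentIdeal_eq_top hS
  obtain ⟨j, hj⟩ := Finset.exists_sup_le_sup_subtype_ne fun i => degreeOf i f - m i
  have hdvd := (h j).1 (m.subtypeDomain (· ≠ j))
  rw [coeff_iota, ← map_pow, ← map_pow] at hdvd
  have hm := (Polynomial.C_dvd_iff_dvd_coeff _ _).mp (C_dvd_of_algebraMap_C_dvd hS hdvd) (m j)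
  rw [coeff_coeffPoly, Finsupp.insertAt_subtypeDomain] at hm
  refine (pow_dvd_pow s (hj.trans_eq ?_)).trans hm
  simp only [degreeOf_iota S hinj, Finsupp.subtypeDomain_apply]

theorem isUnit_coeff_topDeg_of_Q12_iota (hS : ∀ p : A[X], p ∈ S ↔ p.contentIdeal = ⊤)
    (hs : ∀ m : Ideal A, m.IsMaximal → s ∈ m)
    (hQ1 : ∀ d, s ^ (Finset.univ.sup fun i => degreeOf i f - d i) ∣ coeff d f) (j : Fin n)
    (hQ2 : IsUnit (coeff (topDeg (iota S j f)) (iota S j f))) :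
    IsUnit (coeff (topDeg f) f) := by
  have hinj := algebraMap_injective_of_contentIdeal_eq_top fun p => (hS p).mp
  rw [topDeg_iota S hinj, coeff_iota, isUnit_algebraMap_iff_contentIdeal_eq_top hS] at hQ2
  have hN : topDeg f j = degreeOf j f := by simp [topDeg]
  suffices ∀ k ≠ topDeg f j, ∀ m : Ideal A, m.IsMaximal →
      (coeffPoly j ((topDeg f).subtypeDomain (· ≠ j)) f).coeff k ∈ m by
    simpa [coeff_coeffPoly, Finsupp.insertAt_subtypeDomain] using
      Polynomial.isUnit_coeff_of_contentIdeal_eq_top hQ2 this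
  intro k hk m hm
  rw [coeff_coeffPoly]
  rcases hk.lt_or_gt with hlt | hgt
  · have hle := Finset.le_sup (f := fun i => degreeOf i f - Finsupp.insertAt j k
      ((topDeg f).subtypeDomain (· ≠ j)) i) (Finset.mem_univ j)
    simp only [Finsupp.insertAt_self] at hle
    exact Ideal.mem_of_dvd _ ((dvd_pow_self s (by omega)).trans (hQ1 _)) (hs m hm)
  · rw [notMem_support_iff.mp fun hmem => ?_]
    · exact m.zero_mem
    · have := monomial_le_degreeOf j hmem
      rw [Finsupp.insertAt_self] at this
      omega

theorem Q12_of_forall_Q12_iota (hS : ∀ p : A[X], p ∈ S ↔ p.contentIdeal = ⊤)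
    (hs : ∀ m : Ideal A, m.IsMaximal → s ∈ m) [Nontrivial (Fin n)]
    (h : ∀ j, Q12 (algebraMap A[X] (Localization S) (Polynomial.C s)) (iota S j f)) :
    Q12 s f := by
  have hQ1 := dvd_coeff_of_forall_Q12_iota (fun p => (hS p).mp) h
  obtain ⟨j⟩ := (inferInstance : Nonempty (Fin n))
  exact ⟨hQ1, isUnit_coeff_topDeg_of_Q12_iota hS hs hQ1 j (h j).2⟩

end Q12

theorem stmt_3_general {A : Type*} [CommRing A]
    (s : A) (hs : ∀ m : Ideal A, m.IsMaximal → s ∈ m)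
    (S : Submonoid (Polynomial A))
    (hS : (S : Set (Polynomial A)) =
      {f : Polynomial A | ∀ m : Ideal A, m.IsMaximal →
        f ∉ Ideal.map (Polynomial.C : A →+* Polynomial A) m})
    {n : ℕ} (hn : 2 ≤ n) (f : MvPolynomial (Fin n) A) :
    Q12 s f ↔ ∀ j : Fin n,
      Q12 (algebraMap (Polynomial A) (Localization S) (Polynomial.C s)) (iota S j f) := by
  have hS' : ∀ p : A[X], p ∈ S ↔ p.contentIdeal = ⊤ := fun p => by
    rw [Polynomial.contentIdeal_eq_top_iff_forall_notMem_map_C, ← SetLike.mem_coe, hS]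
    rfl
  have : Nontrivial (Fin n) := Fin.nontrivial_iff_two_le.mpr hn
  exact ⟨fun h j => Q12_iota hS' h j, Q12_of_forall_Q12_iota hS' hs⟩

/-- Let `A` be a semilocal Dedekind domain, `s ≠ 0` an element of all
maximal ideals, `n ≥ 2`, and for `j ∈ {1,…,n}` let `A⁽ʲ⁾` be the localization of `A[tⱼ]`
at the polynomials lying in no `𝔪ᵢ·A[tⱼ]`.  A nonzero `f ∈ A[t₁,…,tₙ]` satisfies (Q1) and
(Q2) over `(A, s)` iff for every `j` the polynomial `ι_j(f)` satisfies (Q1) and (Q2) over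
`(A⁽ʲ⁾, s)`. -/
theorem stmt_3 {A : Type*} [CommRing A] [IsDedekindDomain A] (hA : ¬ IsField A)
    (hfin : {I : Ideal A | I.IsMaximal}.Finite)
    (s : A) (hs0 : s ≠ 0) (hs : ∀ m : Ideal A, m.IsMaximal → s ∈ m)
    (S : Submonoid (Polynomial A))
    (hS : (S : Set (Polynomial A)) =
      {f : Polynomial A | ∀ m : Ideal A, m.IsMaximal →
        f ∉ Ideal.map (Polynomial.C : A →+* Polynomial A) m})
    {n : ℕ} (hn : 2 ≤ n) (f : MvPolynomial (Fin n) A) (hf : f ≠ 0) :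
    Q12 s f ↔ ∀ j : Fin n,
      Q12 (algebraMap (Polynomial A) (Localization S) (Polynomial.C s)) (iota S j f) :=
  stmt_3_general s hs S hS hn f
end

section
/- Let A be a semilocal Dedekind domain with maximal ideals 𝔪₁,…,𝔪ᵣ and let s ∈ 𝔪₁⋯𝔪ᵣ be nonzero. Let f ∈ A[t] be a nonzero polynomial of degree N with coefficients a₀,…,a_N. Then the following are equivalent: (a) aᵢ ∈ s^{N−i}·A for all 0 ≤ i ≤ N, and the leading coefficient a_N is a unit of A; (b) there exist an integer M ≥ 0 and polynomials h, g₁,…,g_M ∈ A[t] such that f·h = t^M + s·t^{M−1}·g₁ + s²·t^{M−2}·g₂ + ⋯ + s^M·g_M, and the leading coefficient a_N is a unit of A. (This is the one-variable case of Lemma 5.5, the base case of its induction.) -/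
/-!
(a) ⇒ (b) is explicit: writing `aᵢ = s^{N-i} cᵢ`, take `M = N`, `h = a_N⁻¹` and
`gᵢ = c_{N-i} a_N⁻¹`.

(b) ⇒ (a): condition (a) says that `s^N` divides `f(st)`, and substituting `t ↦ st` in (b) shows
that `s^M` divides `f(st) h(st)`. Reducing (b) modulo a maximal ideal gives `f̄ h̄ = t^M`, so
`N ≤ M` and the coefficient of `t^{M-N}` in `h` lies in no maximal ideal, i.e. is a unit; hence the
content of `h(st)` divides `s^{M-N}`. As `A` is a PID, the content is multiplicative (Gauss), so
`s^N` divides the content of `f(st)`.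
-/

open Polynomial

namespace Polynomial

variable {R : Type*} [CommRing R]

theorem coeff_sum_Icc_C_mul_X_pow_sub (M : ℕ) (b : ℕ → R) (k : ℕ) :
    (∑ i ∈ Finset.Icc 1 M, C (b i) * X ^ (M - i)).coeff k = if k < M then b (M - k) else 0 := by
  rw [finsetSum_coeff]
  simp only [coeff_C_mul_X_pow]
  split_ifs with hk
  · rw [Finset.sum_eq_single (M - k)]
    · rw [if_pos (by omega)]
    · intro i hi hne
      rw [if_neg (by simp only [Finset.mem_Icc] at hi; omega)]
    · intro h; exact absurd (Finset.mem_Icc.mpr ⟨by omega, by omega⟩) h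
  · exact Finset.sum_eq_zero fun i hi => if_neg (by simp only [Finset.mem_Icc] at hi; omega)

theorem exists_mul_eq_X_pow_add_sum_of_pow_dvd_coeff {s : R} {f : R[X]}
    (hdvd : ∀ i ≤ f.natDegree, s ^ (f.natDegree - i) ∣ f.coeff i)
    (hu : IsUnit f.leadingCoeff) :
    ∃ (M : ℕ) (h : R[X]) (g : ℕ → R[X]),
      f * h = X ^ M + ∑ i ∈ Finset.Icc 1 M, C (s ^ i) * X ^ (M - i) * g i := by
  set N := f.natDegree
  choose! c hc using hdvd
  obtain ⟨u, hu⟩ := hu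
  refine ⟨N, C ↑u⁻¹, fun i => C (c (N - i) * ↑u⁻¹), ?_⟩
  simp only [mul_right_comm _ (X ^ _), ← C_mul]
  ext k
  rw [coeff_mul_C, coeff_add, coeff_X_pow, coeff_sum_Icc_C_mul_X_pow_sub]
  rcases lt_trichotomy k N with hk | rfl | hk
  · rw [if_neg hk.ne, if_pos hk, hc k hk.le, Nat.sub_sub_self hk.le, zero_add, mul_assoc]
  · rw [if_pos rfl, if_neg (lt_irrefl _), coeff_natDegree, ← hu, Units.mul_inv, add_zero]
  · rw [coeff_eq_zero_of_natDegree_lt hk, if_neg hk.ne', if_neg (by omega), zero_mul, add_zero]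

theorem map_X_pow_add_sum_of_map_eq_zero {S : Type*} [CommRing S] {φ : R →+* S} {s : R}
    (hs : φ s = 0) (M : ℕ) (g : ℕ → R[X]) :
    (X ^ M + ∑ i ∈ Finset.Icc 1 M, C (s ^ i) * X ^ (M - i) * g i).map φ = X ^ M := by
  rw [Polynomial.map_add, Polynomial.map_pow, map_X, Polynomial.map_sum, add_eq_left]
  refine Finset.sum_eq_zero fun i hi => ?_
  rw [Polynomial.map_mul, Polynomial.map_mul, map_C, map_pow, hs,
    zero_pow (by simp only [Finset.mem_Icc] at hi; omega), map_zero, zero_mul, zero_mul]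

theorem C_pow_dvd_X_pow_add_sum_comp (s : R) (M : ℕ) (g : ℕ → R[X]) :
    C (s ^ M) ∣ (X ^ M + ∑ i ∈ Finset.Icc 1 M, C (s ^ i) * X ^ (M - i) * g i).comp (C s * X) := by
  rw [add_comp, sum_comp]
  refine dvd_add ⟨X ^ M, by rw [X_pow_comp, mul_pow, C_pow]⟩ (Finset.dvd_sum fun i hi => ?_)
  refine ⟨X ^ (M - i) * (g i).comp (C s * X), ?_⟩
  rw [mul_comp, mul_comp, C_comp, X_pow_comp, mul_pow, ← C_pow,
    ← pow_mul_pow_sub s (Finset.mem_Icc.mp hi).2, C_mul]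
  ring

theorem natDegree_le_and_coeff_ne_zero_of_map_mul_eq_X_pow {K : Type*} [CommRing K] [IsDomain K]
    {φ : R →+* K} {f h : R[X]} {M : ℕ} (hlc : φ f.leadingCoeff ≠ 0)
    (hfh : (f * h).map φ = X ^ M) :
    f.natDegree ≤ M ∧ φ (h.coeff (M - f.natDegree)) ≠ 0 := by
  rw [Polynomial.map_mul] at hfh
  have hf : (f.map φ).natDegree = f.natDegree := natDegree_map_of_leadingCoeff_ne_zero φ hlc
  have hh : h.map φ ≠ 0 := right_ne_zero_of_mul (hfh ▸ pow_ne_zero M X_ne_zero)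
  have hdeg := congrArg natDegree hfh
  rw [natDegree_mul (left_ne_zero_of_mul (hfh ▸ pow_ne_zero M X_ne_zero)) hh, natDegree_X_pow,
    hf] at hdeg
  refine ⟨by omega, ?_⟩
  rw [← coeff_map, ← hdeg, Nat.add_sub_cancel_left]
  exact leadingCoeff_ne_zero.mpr hh

theorem pow_sub_dvd_coeff_of_C_pow_dvd_comp [IsDomain R] {s : R} (hs0 : s ≠ 0) {f : R[X]}
    {n : ℕ} (hdvd : C (s ^ n) ∣ f.comp (C s * X)) {i : ℕ} (hi : i ≤ n) :
    s ^ (n - i) ∣ f.coeff i := by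
  have hcoeff : s ^ (n - i) * s ^ i ∣ f.coeff i * s ^ i := by
    rw [pow_sub_mul_pow s hi, ← comp_C_mul_X_coeff]
    exact (C_dvd_iff_dvd_coeff _ _).mp hdvd i
  exact (mul_dvd_mul_iff_right (pow_ne_zero i hs0)).mp hcoeff

theorem C_pow_dvd_comp_of_C_pow_dvd_mul_comp [IsDomain R] [NormalizedGCDMonoid R] {s : R}
    (hs0 : s ≠ 0) {f h : R[X]} {n k : ℕ} (hk : IsUnit (h.coeff k))
    (hdvd : C (s ^ (n + k)) ∣ (f * h).comp (C s * X)) :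
    C (s ^ n) ∣ f.comp (C s * X) := by
  rw [← dvd_content_iff_C_dvd] at hdvd ⊢
  rw [mul_comp, (associated_content_mul _ _).dvd_iff_dvd_right] at hdvd
  have hQ : (h.comp (C s * X)).content ∣ s ^ k :=
    (content_dvd_coeff k).trans <| by rw [comp_C_mul_X_coeff]; exact hk.mul_left_dvd.mpr dvd_rfl
  rw [pow_add] at hdvd
  exact (mul_dvd_mul_iff_right (pow_ne_zero k hs0)).mp (hdvd.trans (mul_dvd_mul_left _ hQ))

theorem natDegree_le_and_isUnit_coeff_of_mul_eq [Nontrivial R] {s : R}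
    (hs : ∀ m : Ideal R, m.IsMaximal → s ∈ m) {f h : R[X]} {M : ℕ} {g : ℕ → R[X]}
    (hu : IsUnit f.leadingCoeff)
    (hfh : f * h = X ^ M + ∑ i ∈ Finset.Icc 1 M, C (s ^ i) * X ^ (M - i) * g i) :
    f.natDegree ≤ M ∧ IsUnit (h.coeff (M - f.natDegree)) := by
  have hred : ∀ m : Ideal R, m.IsMaximal →
      f.natDegree ≤ M ∧ Ideal.Quotient.mk m (h.coeff (M - f.natDegree)) ≠ 0 := by
    intro m hm
    refine natDegree_le_and_coeff_ne_zero_of_map_mul_eq_X_pow (hu.map _).ne_zero ?_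
    rw [hfh, map_X_pow_add_sum_of_map_eq_zero (Ideal.Quotient.eq_zero_iff_mem.mpr (hs m hm))]
  obtain ⟨m, hm⟩ := Ideal.exists_maximal R
  refine ⟨(hred m hm).1, not_not.mp fun hnu => ?_⟩
  obtain ⟨m', hm', hmem⟩ := exists_max_ideal_of_mem_nonunits hnu
  exact (hred m' hm').2 (Ideal.Quotient.eq_zero_iff_mem.mpr hmem)

end Polynomial

theorem stmt_4_general {A : Type*} [CommRing A] [IsDedekindDomain A]
    (hfin : {I : Ideal A | I.IsMaximal}.Finite)
    (s : A) (hs0 : s ≠ 0) (hs : ∀ m : Ideal A, m.IsMaximal → s ∈ m)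
    (f : Polynomial A) :
    ((∀ i ≤ f.natDegree, s ^ (f.natDegree - i) ∣ f.coeff i) ∧ IsUnit f.leadingCoeff) ↔
    ((∃ (M : ℕ) (h : Polynomial A) (g : ℕ → Polynomial A),
        f * h = X ^ M + ∑ i ∈ Finset.Icc 1 M, C (s ^ i) * X ^ (M - i) * g i) ∧
      IsUnit f.leadingCoeff) := by
  refine and_congr_left fun hu =>
    ⟨fun hdvd => exists_mul_eq_X_pow_add_sum_of_pow_dvd_coeff hdvd hu, ?_⟩
  rintro ⟨M, h, g, hfh⟩
  have := IsPrincipalIdealRing.of_finite_maximals hfin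
  let _ := UniqueFactorizationMonoid.strongNormalizationMonoid (α := A)
  let _ := UniqueFactorizationMonoid.toNormalizedGCDMonoid A
  obtain ⟨hNM, hunit⟩ := natDegree_le_and_isUnit_coeff_of_mul_eq hs hu hfh
  have hdvd : C (s ^ (f.natDegree + (M - f.natDegree))) ∣ (f * h).comp (C s * X) := by
    rw [Nat.add_sub_cancel' hNM, hfh]
    exact C_pow_dvd_X_pow_add_sum_comp s M g
  exact fun i hi => pow_sub_dvd_coeff_of_C_pow_dvd_comp hs0
    (C_pow_dvd_comp_of_C_pow_dvd_mul_comp hs0 hunit hdvd) hi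

/-- one-variable case of Lemma 5.5.  Let `A` be a semilocal Dedekind
domain and `s ≠ 0` an element of every maximal ideal of `A`.  For a nonzero `f ∈ A[t]` of
degree `N` with coefficients `a₀, …, a_N`, the following are equivalent:
(a) `aᵢ ∈ s^{N−i}·A` for all `i ≤ N` and the leading coefficient `a_N` is a unit;
(b) there are `M ≥ 0` and `h, g₁, …, g_M ∈ A[t]` with
`f·h = t^M + s·t^{M−1}·g₁ + s²·t^{M−2}·g₂ + ⋯ + s^M·g_M`, and `a_N` is a unit. -/
theorem stmt_4 {A : Type*} [CommRing A] [IsDedekindDomain A] (hA : ¬ IsField A)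
    (hfin : {I : Ideal A | I.IsMaximal}.Finite)
    (s : A) (hs0 : s ≠ 0) (hs : ∀ m : Ideal A, m.IsMaximal → s ∈ m)
    (f : Polynomial A) (hf : f ≠ 0) :
    ((∀ i ≤ f.natDegree, s ^ (f.natDegree - i) ∣ f.coeff i) ∧ IsUnit f.leadingCoeff) ↔
    ((∃ (M : ℕ) (h : Polynomial A) (g : ℕ → Polynomial A),
        f * h = X ^ M + ∑ i ∈ Finset.Icc 1 M, C (s ^ i) * X ^ (M - i) * g i) ∧
      IsUnit f.leadingCoeff) :=
  stmt_4_general hfin s hs0 hs f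
end

section
/- Let A be a semilocal Dedekind domain with maximal ideals 𝔪₁,…,𝔪ᵣ, s ∈ 𝔪₁⋯𝔪ᵣ nonzero, K the fraction field of A, and 𝒱 a set of normalized discrete valuations on K containing none of the valuations v₁,…,vᵣ attached to 𝔪₁,…,𝔪ᵣ. Let f, g ∈ A[t₁,…,tₙ] be polynomials. Then the product f·g belongs to Qₙ(A,𝒱,s) if and only if both f and g belong to Qₙ(A,𝒱,s). -/
/-!
For a height-one prime `P` of `A` and a variable `tⱼ`, condition (Q1) says that the Gauss norm of
`f` for the `P`-adic valuation, with weight `v_P(s)^{dⱼ}` on the monomial `t^d`, is at most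
`v_P(s)^{Nⱼ}` (divisibility in a Dedekind domain is checked one prime at a time), and (Q2.5) says
that the Gauss norm of `f` for `v ∈ 𝒱` is attained at the top coefficient. Gauss norms are
multiplicative, the partial degrees `Nⱼ` add, and the top coefficient of `f * g` is the product of
the top coefficients. Once these are units, each Gauss norm of a factor is at least its top term,
so a bound for `f * g` by the product of the top terms forces equality for both factors.
-/

open MvPolynomial

/-- Membership in `Qₙ(A, 𝒱, s)`: `f` is nonzero and satisfies
(Q1) every coefficient lies in `s^{maxⱼ(Nⱼ−iⱼ)}·A`;
(Q2) the top coefficient `a_{N₁…Nₙ}` is a unit of `A`;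
(Q2.5) `v(a_{i₁…iₙ}) ≥ v(a_{N₁…Nₙ})` for every `v ∈ 𝒱` (valuations written
multiplicatively, so `≥` becomes `≤`);
(Q3) substituting `0` for any variable `tⱼ` gives a nonzero polynomial. -/
def memQ {A : Type*} [CommRing A] [IsDomain A] {K : Type*} [Field K] [Algebra A K]
    [IsFractionRing A K] (𝒱 : Set (Valuation K (WithZero (Multiplicative ℤ)))) (s : A)
    {n : ℕ} (f : MvPolynomial (Fin n) A) : Prop :=
  f ≠ 0 ∧
  (∀ d : Fin n →₀ ℕ, s ^ (Finset.univ.sup fun j => degreeOf j f - d j) ∣ coeff d f) ∧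
  IsUnit (coeff (topDeg f) f) ∧
  (∀ v ∈ 𝒱, ∀ d : Fin n →₀ ℕ,
    v (algebraMap A K (coeff d f)) ≤ v (algebraMap A K (coeff (topDeg f) f))) ∧
  (∀ j : Fin n,
    MvPolynomial.eval₂ (MvPolynomial.C : A →+* MvPolynomial (Fin n) A)
      (fun i => if i = j then 0 else X i) f ≠ 0)

open Finset

lemma eq_and_eq_of_mul_le_mul {Γ₀ : Type*} [LinearOrderedCommGroupWithZero Γ₀] {a b c d : Γ₀}
    (hab : a ≤ b) (hcd : c ≤ d) (hb : b ≠ 0) (hd : d ≠ 0) (h : b * d ≤ a * c) :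
    a = b ∧ c = d := by
  refine ⟨hab.antisymm ?_, hcd.antisymm ?_⟩ <;> by_contra! hlt
  · exact h.not_gt <| (mul_le_mul_right hcd a).trans_lt <|
      mul_lt_mul_of_pos_right hlt (zero_lt_iff.2 hd)
  · exact h.not_gt <| (mul_le_mul_left hab c).trans_lt <|
      mul_lt_mul_of_pos_left hlt (zero_lt_iff.2 hb)

lemma pow_finset_sup_dvd_iff {M ι : Type*} [Monoid M] {a b : M} {s : Finset ι} {e : ι → ℕ} :
    a ^ s.sup e ∣ b ↔ ∀ i ∈ s, a ^ e i ∣ b := by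
  refine ⟨fun h i hi => (pow_dvd_pow a (le_sup hi)).trans h, fun h => ?_⟩
  refine sup_induction (p := fun k => a ^ k ∣ b) (by simp) (fun k hk l hl => ?_) h
  rcases le_total k l with hkl | hlk
  · rwa [sup_eq_right.2 hkl]
  · rwa [sup_eq_left.2 hlk]

def Finsupp.powApplyAddChar {σ M : Type*} [CommMonoid M] (γ : M) (j : σ) :
    AddChar (σ →₀ ℕ) M where
  toFun d := γ ^ d j
  map_zero_eq_one' := by simp
  map_add_eq_mul' a b := by simp [pow_add]

@[simp]
lemma Finsupp.powApplyAddChar_apply {σ M : Type*} [CommMonoid M] (γ : M) (j : σ) (d : σ →₀ ℕ) :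
    Finsupp.powApplyAddChar γ j d = γ ^ d j :=
  rfl

namespace MvPolynomial

section GaussNorm

variable {R σ Γ₀ : Type*} [CommRing R] [LinearOrderedCommGroupWithZero Γ₀]
  (v : Valuation R Γ₀) (ψ : AddChar (σ →₀ ℕ) Γ₀)

lemma map_mul_mul_map_add (a b : R) (u w : σ →₀ ℕ) :
    v (a * b) * ψ (u + w) = v a * ψ u * (v b * ψ w) := by
  rw [map_mul, ψ.map_add_eq_mul, mul_mul_mul_comm]

noncomputable def gaussNorm (F : MvPolynomial σ R) : Γ₀ :=
  F.support.sup fun d => v (coeff d F) * ψ d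

variable {v ψ} {F G : MvPolynomial σ R}

lemma le_gaussNorm (d : σ →₀ ℕ) : v (coeff d F) * ψ d ≤ gaussNorm v ψ F := by
  by_cases hd : d ∈ F.support
  · exact le_sup (f := fun d => v (coeff d F) * ψ d) hd
  · simp [notMem_support_iff.1 hd]

lemma gaussNorm_le_iff {γ : Γ₀} : gaussNorm v ψ F ≤ γ ↔ ∀ d, v (coeff d F) * ψ d ≤ γ :=
  ⟨fun h d => (le_gaussNorm d).trans h, fun h => Finset.sup_le fun d _ => h d⟩

lemma exists_toLex_max_eq_gaussNorm [LinearOrder σ] (hF : gaussNorm v ψ F ≠ 0) :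
    ∃ d, v (coeff d F) * ψ d = gaussNorm v ψ F ∧
      ∀ u, v (coeff u F) * ψ u = gaussNorm v ψ F → toLex u ≤ toLex d := by
  classical
  set D := F.support.filter fun d => v (coeff d F) * ψ d = gaussNorm v ψ F
  have hsupp : F.support.Nonempty := by
    refine nonempty_iff_ne_empty.2 fun h => hF ?_
    rw [gaussNorm, h, sup_empty]
    exact (bot_unique zero_le).symm
  have hD : D.Nonempty := by
    obtain ⟨d, hd, hmax⟩ := exists_mem_eq_sup F.support hsupp fun d => v (coeff d F) * ψ d
    exact ⟨d, mem_filter.2 ⟨hd, hmax.symm⟩⟩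
  obtain ⟨d, hd, hmax⟩ := D.exists_max_image toLex hD
  refine ⟨d, (mem_filter.1 hd).2, fun u hu => hmax u (mem_filter.2 ⟨?_, hu⟩)⟩
  rw [mem_support_iff]
  intro h0
  exact hF (by rw [← hu, h0, map_zero, zero_mul])

lemma gaussNorm_mul_le : gaussNorm v ψ (F * G) ≤ gaussNorm v ψ F * gaussNorm v ψ G := by
  classical
  refine gaussNorm_le_iff.2 fun d => ?_
  obtain ⟨p, hp, hmax⟩ := (antidiagonal d).exists_max_image
    (fun p => v (coeff p.1 F * coeff p.2 G)) ⟨(d, 0), by simp⟩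
  obtain rfl := mem_antidiagonal.1 hp
  calc v (coeff (p.1 + p.2) (F * G)) * ψ (p.1 + p.2)
      ≤ v (coeff p.1 F * coeff p.2 G) * ψ (p.1 + p.2) := by
        gcongr
        rw [coeff_mul]
        exact v.map_sum_le hmax
    _ = v (coeff p.1 F) * ψ p.1 * (v (coeff p.2 G) * ψ p.2) := map_mul_mul_map_add v ψ _ _ _ _
    _ ≤ gaussNorm v ψ F * gaussNorm v ψ G := mul_le_mul' (le_gaussNorm _) (le_gaussNorm _)

/-- The coefficient of `F * G` at the sum of the lexicographically largest exponents where `F`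
and `G` attain their Gauss norms has a single dominant term. -/
lemma mul_gaussNorm_le_gaussNorm_mul :
    gaussNorm v ψ F * gaussNorm v ψ G ≤ gaussNorm v ψ (F * G) := by
  classical
  let : LinearOrder σ := IsWellOrder.linearOrder WellOrderingRel
  rcases eq_or_ne (gaussNorm v ψ F) 0 with hF | hF
  · simp [hF]
  rcases eq_or_ne (gaussNorm v ψ G) 0 with hG | hG
  · simp [hG]
  obtain ⟨d, hd, hdmax⟩ := exists_toLex_max_eq_gaussNorm hF
  obtain ⟨e, he, hemax⟩ := exists_toLex_max_eq_gaussNorm hG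
  have hlt : ∀ p ∈ antidiagonal (d + e) \ {(d, e)},
      v (coeff p.1 F * coeff p.2 G) < v (coeff d F * coeff e G) := by
    rintro ⟨u, w⟩ hp
    obtain ⟨huw, hne⟩ : u + w = d + e ∧ ¬(u = d ∧ w = e) := by simpa using hp
    have hdom :
        v (coeff u F) * ψ u * (v (coeff w G) * ψ w) < gaussNorm v ψ F * gaussNorm v ψ G := by
      refine (mul_le_mul' (le_gaussNorm u) (le_gaussNorm w)).lt_of_ne fun heq => hne ?_
      obtain ⟨hu, hw⟩ := eq_and_eq_of_mul_le_mul (le_gaussNorm u) (le_gaussNorm w) hF hG heq.ge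
      have := (add_eq_add_iff_eq_and_eq (hdmax u hu) (hemax w hw)).1 (congrArg toLex huw)
      exact ⟨toLex.injective this.1, toLex.injective this.2⟩
    refine lt_of_mul_lt_mul_right' (a := ψ (d + e)) ?_
    rwa [← huw, map_mul_mul_map_add, huw, map_mul_mul_map_add, hd, he]
  calc gaussNorm v ψ F * gaussNorm v ψ G = v (coeff (d + e) (F * G)) * ψ (d + e) := by
        rw [coeff_mul, v.map_sum_eq_of_lt (by simp) hlt, map_mul_mul_map_add, hd, he]
    _ ≤ gaussNorm v ψ (F * G) := le_gaussNorm _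

lemma gaussNorm_mul : gaussNorm v ψ (F * G) = gaussNorm v ψ F * gaussNorm v ψ G :=
  gaussNorm_mul_le.antisymm mul_gaussNorm_le_gaussNorm_mul

lemma gaussNorm_mul_le_mul_iff {a b : Γ₀} (ha : a ≠ 0) (hb : b ≠ 0) (haF : a ≤ gaussNorm v ψ F)
    (hbG : b ≤ gaussNorm v ψ G) :
    gaussNorm v ψ (F * G) ≤ a * b ↔ gaussNorm v ψ F ≤ a ∧ gaussNorm v ψ G ≤ b := by
  rw [gaussNorm_mul]
  refine ⟨fun h => ?_, fun h => mul_le_mul' h.1 h.2⟩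
  obtain ⟨rfl, rfl⟩ := eq_and_eq_of_mul_le_mul haF hbG
    (ne_zero_of_lt (lt_of_lt_of_le (zero_lt_iff.2 ha) haF))
    (ne_zero_of_lt (lt_of_lt_of_le (zero_lt_iff.2 hb) hbG)) h
  exact ⟨le_rfl, le_rfl⟩

lemma gaussNorm_one_le_iff {γ : Γ₀} : gaussNorm v 1 F ≤ γ ↔ ∀ d, v (coeff d F) ≤ γ := by
  simp [gaussNorm_le_iff]

end GaussNorm

section TopDeg

variable {R σ : Type*} [CommSemiring R] [Fintype σ] {f g : MvPolynomial σ R}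

lemma topDeg_apply (j : σ) : topDeg f j = degreeOf j f :=
  rfl

lemma le_topDeg_of_coeff_ne_zero {d : σ →₀ ℕ} (hd : coeff d f ≠ 0) : d ≤ topDeg f :=
  fun j => monomial_le_degreeOf j (mem_support_iff.2 hd)

variable [NoZeroDivisors R]

lemma topDeg_mul (hf : f ≠ 0) (hg : g ≠ 0) : topDeg (f * g) = topDeg f + topDeg g := by
  ext j
  simp [topDeg_apply, degreeOf_mul_eq hf hg]

lemma coeff_topDeg_mul (hf : f ≠ 0) (hg : g ≠ 0) :
    coeff (topDeg (f * g)) (f * g) = coeff (topDeg f) f * coeff (topDeg g) g := by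
  classical
  rw [topDeg_mul hf hg, coeff_mul]
  refine sum_eq_single_of_mem (topDeg f, topDeg g) (mem_antidiagonal.2 rfl)
    fun ⟨u, w⟩ huw hne => ?_
  by_contra h
  obtain ⟨hu, hw⟩ := mul_ne_zero_iff.1 h
  exact hne (Prod.ext_iff.2 <| (add_eq_add_iff_eq_and_eq (le_topDeg_of_coeff_ne_zero hu)
    (le_topDeg_of_coeff_ne_zero hw)).1 (mem_antidiagonal.1 huw))

end TopDeg

end MvPolynomial

section Dedekind

open IsDedekindDomain HeightOneSpectrum
open scoped WithZero

variable {A : Type*} [CommRing A] [IsDedekindDomain A]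

lemma IsDedekindDomain.HeightOneSpectrum.intValuation_of_isUnit (P : HeightOneSpectrum A) {u : A}
    (hu : IsUnit u) : P.intValuation u = 1 := by
  obtain ⟨u, rfl⟩ := hu
  refine (P.intValuation_le_one u).antisymm ?_
  calc (1 : ℤᵐ⁰) = P.intValuation u * P.intValuation ↑u⁻¹ := by
        rw [← map_mul, Units.mul_inv, map_one]
    _ ≤ P.intValuation u := mul_le_of_le_one_right' (P.intValuation_le_one _)

lemma dvd_iff_forall_intValuation_le {a b : A} (hb : b ≠ 0) :
    b ∣ a ↔ ∀ P : HeightOneSpectrum A, P.intValuation a ≤ P.intValuation b := by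
  refine ⟨fun ⟨c, hc⟩ P => ?_, fun h => ?_⟩
  · rw [hc, map_mul]
    exact mul_le_of_le_one_right' (P.intValuation_le_one c)
  let K := FractionRing A
  have hb' : algebraMap A K b ≠ 0 := (map_ne_zero_iff _ (IsFractionRing.injective A K)).2 hb
  obtain ⟨c, hc⟩ := mem_integers_of_valuation_le_one K (algebraMap A K a / algebraMap A K b)
    fun P => by
      rw [map_div₀, valuation_of_algebraMap, valuation_of_algebraMap,
        div_le_one₀ (zero_lt_iff.2 (P.intValuation_ne_zero b hb))]
      exact h P
  refine ⟨c, IsFractionRing.injective A K ?_⟩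
  rw [map_mul, hc, mul_div_cancel₀ _ hb']

lemma pow_sub_dvd_iff_forall_intValuation {s : A} (hs : s ≠ 0) (a : A) (N d : ℕ) :
    s ^ (N - d) ∣ a ↔ ∀ P : HeightOneSpectrum A,
      P.intValuation a * P.intValuation s ^ d ≤ P.intValuation s ^ N := by
  rw [dvd_iff_forall_intValuation_le (pow_ne_zero _ hs)]
  refine forall_congr' fun P => ?_
  rcases le_or_gt d N with hdN | hNd
  · have hγ : 0 < P.intValuation s ^ d :=
      zero_lt_iff.2 (pow_ne_zero _ (P.intValuation_ne_zero s hs))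
    rw [map_pow, ← mul_le_mul_iff_of_pos_right hγ, ← pow_add, Nat.sub_add_cancel hdN]
  · rw [Nat.sub_eq_zero_of_le hNd.le, pow_zero, map_one]
    exact iff_of_true (P.intValuation_le_one a)
      ((mul_le_of_le_one_left' (P.intValuation_le_one a)).trans
        (pow_le_pow_right_of_le_one' (P.intValuation_le_one s) hNd.le))

variable {σ : Type*} [Fintype σ]

lemma forall_pow_sup_dvd_coeff_iff {s : A} (hs : s ≠ 0) (f : MvPolynomial σ A) :
    (∀ d : σ →₀ ℕ, s ^ (univ.sup fun j => degreeOf j f - d j) ∣ coeff d f) ↔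
      ∀ (P : HeightOneSpectrum A) (j : σ),
        gaussNorm P.intValuation (Finsupp.powApplyAddChar (P.intValuation s) j) f ≤
          P.intValuation s ^ degreeOf j f := by
  simp only [pow_finset_sup_dvd_iff, mem_univ, true_implies,
    pow_sub_dvd_iff_forall_intValuation hs, gaussNorm_le_iff, Finsupp.powApplyAddChar_apply]
  exact ⟨fun h P j d => h d j P, fun h d j P => h P j d⟩

lemma pow_degreeOf_le_gaussNorm (P : HeightOneSpectrum A) (γ : ℤᵐ⁰) (j : σ)
    {f : MvPolynomial σ A} (hf : IsUnit (coeff (topDeg f) f)) :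
    γ ^ degreeOf j f ≤ gaussNorm P.intValuation (Finsupp.powApplyAddChar γ j) f := by
  simpa [P.intValuation_of_isUnit hf, topDeg_apply] using
    le_gaussNorm (v := P.intValuation) (ψ := Finsupp.powApplyAddChar γ j) (F := f) (topDeg f)

variable {f g : MvPolynomial σ A}

lemma forall_pow_sup_dvd_coeff_mul_iff {s : A} (hs : s ≠ 0) (hf : f ≠ 0) (hg : g ≠ 0)
    (hfu : IsUnit (coeff (topDeg f) f)) (hgu : IsUnit (coeff (topDeg g) g)) :
    (∀ d, s ^ (univ.sup fun j => degreeOf j (f * g) - d j) ∣ coeff d (f * g)) ↔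
      (∀ d, s ^ (univ.sup fun j => degreeOf j f - d j) ∣ coeff d f) ∧
        (∀ d, s ^ (univ.sup fun j => degreeOf j g - d j) ∣ coeff d g) := by
  simp only [forall_pow_sup_dvd_coeff_iff hs, ← forall_and]
  refine forall₂_congr fun P j => ?_
  have hγ : P.intValuation s ≠ 0 := P.intValuation_ne_zero s hs
  rw [degreeOf_mul_eq hf hg, pow_add]
  exact gaussNorm_mul_le_mul_iff (pow_ne_zero _ hγ) (pow_ne_zero _ hγ)
    (pow_degreeOf_le_gaussNorm P _ j hfu) (pow_degreeOf_le_gaussNorm P _ j hgu)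

end Dedekind

lemma forall_valuation_coeff_le_coeff_topDeg_mul_iff {R Γ₀ σ : Type*} [CommRing R] [IsDomain R]
    [LinearOrderedCommGroupWithZero Γ₀] [Fintype σ] (v : Valuation R Γ₀)
    {f g : MvPolynomial σ R} (hf : f ≠ 0) (hg : g ≠ 0)
    (hfu : IsUnit (coeff (topDeg f) f)) (hgu : IsUnit (coeff (topDeg g) g)) :
    (∀ d, v (coeff d (f * g)) ≤ v (coeff (topDeg (f * g)) (f * g))) ↔
      (∀ d, v (coeff d f) ≤ v (coeff (topDeg f) f)) ∧
        (∀ d, v (coeff d g) ≤ v (coeff (topDeg g) g)) := by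
  have top_le (F : MvPolynomial σ R) : v (coeff (topDeg F) F) ≤ gaussNorm v 1 F := by
    simpa using le_gaussNorm (v := v) (ψ := 1) (F := F) (topDeg F)
  simp only [← gaussNorm_one_le_iff, coeff_topDeg_mul hf hg, map_mul]
  exact gaussNorm_mul_le_mul_iff (hfu.map v).ne_zero (hgu.map v).ne_zero (top_le f) (top_le g)

theorem memQ_mul_iff_of_isUnit {A : Type*} [CommRing A] [IsDedekindDomain A] {K : Type*} [Field K]
    [Algebra A K] [IsFractionRing A K] (𝒱 : Set (Valuation K (WithZero (Multiplicative ℤ))))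
    {s : A} (hs : s ≠ 0) {n : ℕ} {f g : MvPolynomial (Fin n) A} (hf : f ≠ 0) (hg : g ≠ 0)
    (hfu : IsUnit (coeff (topDeg f) f)) (hgu : IsUnit (coeff (topDeg g) g)) :
    memQ 𝒱 s (f * g) ↔ memQ 𝒱 s f ∧ memQ 𝒱 s g := by
  have hval : (∀ v ∈ 𝒱, ∀ d, v (algebraMap A K (coeff d (f * g))) ≤
        v (algebraMap A K (coeff (topDeg (f * g)) (f * g)))) ↔
      (∀ v ∈ 𝒱, ∀ d,
          v (algebraMap A K (coeff d f)) ≤ v (algebraMap A K (coeff (topDeg f) f))) ∧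
        (∀ v ∈ 𝒱, ∀ d,
          v (algebraMap A K (coeff d g)) ≤ v (algebraMap A K (coeff (topDeg g) g))) := by
    refine (forall₂_congr fun v _ => ?_).trans forall₂_and
    exact forall_valuation_coeff_le_coeff_topDeg_mul_iff (v.comap (algebraMap A K)) hf hg hfu hgu
  rw [memQ, memQ, memQ, forall_pow_sup_dvd_coeff_mul_iff hs hf hg hfu hgu, hval,
    coeff_topDeg_mul hf hg]
  simp only [eval₂_mul, ne_eq, mul_eq_zero, not_or, forall_and, hf, hg, hfu, hgu, hfu.mul hgu,
    not_false_eq_true, true_and]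
  tauto

theorem stmt_7_general {A : Type*} [CommRing A] [IsDedekindDomain A]
    {K : Type*} [Field K] [Algebra A K] [IsFractionRing A K]
    (𝒱 : Set (Valuation K (WithZero (Multiplicative ℤ))))
    (s : A) (hs0 : s ≠ 0)
    {n : ℕ} (f g : MvPolynomial (Fin n) A) :
    memQ 𝒱 s (f * g) ↔ (memQ 𝒱 s f ∧ memQ 𝒱 s g) := by
  refine ⟨fun h => ?_, fun ⟨hf, hg⟩ =>
    (memQ_mul_iff_of_isUnit 𝒱 hs0 hf.1 hg.1 hf.2.2.1 hg.2.2.1).2 ⟨hf, hg⟩⟩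
  obtain ⟨hf, hg⟩ := mul_ne_zero_iff.1 h.1
  obtain ⟨hfu, hgu⟩ := IsUnit.mul_iff.1 (coeff_topDeg_mul hf hg ▸ h.2.2.1)
  exact (memQ_mul_iff_of_isUnit 𝒱 hs0 hf hg hfu hgu).1 h

/-- Lemma 5.7.  Let `A` be a semilocal Dedekind domain, `s ≠ 0` an
element of every maximal ideal, `K = Frac A`, and `𝒱` a set of normalized discrete
valuations on `K` containing none of the valuations attached to the maximal ideals of `A`.
For `f, g ∈ A[t₁,…,tₙ]` one has `f·g ∈ Qₙ(A,𝒱,s)` iff `f ∈ Qₙ(A,𝒱,s)` and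
`g ∈ Qₙ(A,𝒱,s)`. -/
theorem stmt_7 {A : Type*} [CommRing A] [IsDedekindDomain A] (hA : ¬ IsField A)
    (hfin : {I : Ideal A | I.IsMaximal}.Finite)
    {K : Type*} [Field K] [Algebra A K] [IsFractionRing A K]
    (𝒱 : Set (Valuation K (WithZero (Multiplicative ℤ))))
    (hnorm : ∀ v ∈ 𝒱, Function.Surjective v)
    (hnot : ∀ v ∈ 𝒱, ∀ P : IsDedekindDomain.HeightOneSpectrum A,
      v ≠ P.valuation (K := K))
    (s : A) (hs0 : s ≠ 0) (hs : ∀ m : Ideal A, m.IsMaximal → s ∈ m)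
    {n : ℕ} (f g : MvPolynomial (Fin n) A) :
    memQ 𝒱 s (f * g) ↔ (memQ 𝒱 s f ∧ memQ 𝒱 s g) :=
  stmt_7_general 𝒱 s hs0 f g
end
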